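/- arXiv:1903.07734 — 3 statements merged into one kernel-verified Lean document; each statement's English description precedes it below -/
import Mathlib

section
/- There exist polynomials x_w, y_w ∈ ℂ[x_1,…,x_n] indexed by w ∈ S_n such that the identity operator on ℂ[x_1,…,x_n] decomposes as id = Σ_{w∈S_n} M_{x_w} ∘ ∂_{w_0} ∘ M_{y_w}, where M_g denotes multiplication by g and ∂_{w_0} is the longest divided difference operator. -/
/-!
Expand the Cauchy kernel `∏_{i<j} (xᵢ - yⱼ)` in the `y`-variables as `∑_d c_d(x) y^d`.
Substituting `yⱼ = x_{u j}` for `u ∈ Sₙ` gives `Δ` when `u = 1` and `0` otherwise, because a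
permutation `u ≠ 1` has some `u j < j`, which kills the factor `x_{u j} - x_{u j}`. The
exponent of `yⱼ` is at most `j`, so only the `n!` monomials below the staircase
`(0, 1, …, n-1)` occur, and they can be indexed by `Sₙ`. With `x_w` the coefficients and
`y_w` the monomials, `Δ · ∑_w x_w ∂_{w₀}(y_w f) = ∑_u sgn(u) (∑_w x_w u(y_w)) u(f) = Δ f`, and
`Δ ≠ 0` cancels.
-/

open MvPolynomial

/-- The Vandermonde determinant `Δ = ∏_{i<j} (xᵢ - xⱼ)`. -/
noncomputable def vandermonde' (n : ℕ) : MvPolynomial (Fin n) ℂ :=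
  ∏ p ∈ Finset.univ.filter (fun p : Fin n × Fin n => p.1 < p.2), (X p.1 - X p.2)

theorem Equiv.Perm.eq_one_of_forall_le {α : Type*} [PartialOrder α] [Finite α] {u : Perm α}
    (h : ∀ a, a ≤ u a) : u = 1 := by
  have le_pow_apply : ∀ k a, a ≤ (u ^ k) a := by
    intro k
    induction k with
    | zero => exact fun a => le_rfl
    | succ k ih => exact fun a => (ih a).trans <| by rw [pow_succ', Perm.mul_apply]; exact h _
  ext a
  refine le_antisymm ?_ (h a)
  calc u a ≤ (u ^ (Nat.card (Perm α) - 1)) (u a) := le_pow_apply _ _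
    _ = a := by rw [← Perm.mul_apply, pow_sub_one_mul Nat.card_pos.ne', pow_card_eq_one']; rfl

theorem Equiv.Perm.exists_apply_lt {α : Type*} [LinearOrder α] [Finite α] {u : Perm α}
    (hu : u ≠ 1) : ∃ a, u a < a := by
  contrapose! hu
  exact eq_one_of_forall_le hu

theorem MvPolynomial.exists_sum_mul_aeval_eq_eval {R S σ ι : Type*} [CommSemiring R]
    [CommSemiring S] [Algebra R S] [Fintype ι] {s : Finset (σ →₀ ℕ)} (e : ι ≃ s)
    (K : MvPolynomial σ S) (hK : K.support ⊆ s) :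
    ∃ (x : ι → S) (y : ι → MvPolynomial σ R), ∀ g : σ → S,
      ∑ i, x i * aeval g (y i) = eval g K := by
  refine ⟨fun i => K.coeff (e i), fun i => monomial (e i) 1, fun g => ?_⟩
  calc ∑ i, K.coeff (e i) * aeval g (monomial (e i : σ →₀ ℕ) (1 : R))
      = ∑ d ∈ s, K.coeff d * (d.prod fun j k => g j ^ k) := by
        simp only [aeval_monomial, map_one, one_mul]
        rw [e.sum_comp (fun d => K.coeff d * (d.1.prod fun j k => g j ^ k))]
        exact Finset.sum_coe_sort s (fun d => K.coeff d * (d.prod fun j k => g j ^ k))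
    _ = eval g K := by
        rw [eval_eq, ← Finset.sum_subset hK]
        · rfl
        · intro d _ hd
          rw [notMem_support_iff.mp hd, zero_mul]

/-- `∏_{i<j} (xᵢ - yⱼ)`, a polynomial in the variables `yⱼ` with coefficients in `R[x]`. -/
noncomputable def cauchyKernel (R : Type*) [CommRing R] (n : ℕ) :
    MvPolynomial (Fin n) (MvPolynomial (Fin n) R) :=
  ∏ p ∈ Finset.univ.filter (fun p : Fin n × Fin n => p.1 < p.2), (C (X p.1) - X p.2)

noncomputable def staircase (n : ℕ) : Fin n →₀ ℕ := Finsupp.equivFunOnFinite.symm fun j => j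

section CauchyKernel

variable {R : Type*} [CommRing R] {n : ℕ}

theorem eval_X_cauchyKernel : eval X (cauchyKernel ℂ n) = vandermonde' n := by
  simp [cauchyKernel, vandermonde', map_prod]

theorem eval_cauchyKernel_eq_zero {g : Fin n → MvPolynomial (Fin n) R} {i j : Fin n}
    (hij : i < j) (hg : g j = X i) : eval g (cauchyKernel R n) = 0 := by
  rw [cauchyKernel, map_prod]
  exact Finset.prod_eq_zero (i := (i, j)) (by simpa using hij) (by simp [hg])

theorem degreeOf_cauchyKernel_le (j : Fin n) : degreeOf j (cauchyKernel R n) ≤ j := by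
  refine (degreeOf_prod_le _ _ _).trans ?_
  have degreeOf_factor_le : ∀ p : Fin n × Fin n,
      degreeOf j (C (X p.1) - X p.2 : MvPolynomial (Fin n) (MvPolynomial (Fin n) R)) ≤
        if p.2 = j then 1 else 0 := by
    intro p
    refine (degreeOf_sub_le _ _ _).trans ?_
    rw [degreeOf_C, zero_max]
    split_ifs with h
    · subst h
      simpa using degreeOf_mul_X_self p.2 (1 : MvPolynomial (Fin n) (MvPolynomial (Fin n) R))
    · exact (degreeOf_X_of_ne (Ne.symm h)).le
  refine (Finset.sum_le_sum fun p _ => degreeOf_factor_le p).trans_eq ?_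
  have pairs_ending_at : {p ∈ (Finset.univ : Finset (Fin n × Fin n)) | p.1 < p.2 ∧ p.2 = j} =
      Finset.Iio j ×ˢ {j} := by
    ext ⟨a, b⟩
    simp only [Finset.mem_filter, Finset.mem_univ, true_and, Finset.mem_product,
      Finset.mem_Iio, Finset.mem_singleton]
    constructor <;> rintro ⟨hab, rfl⟩ <;> exact ⟨hab, rfl⟩
  simp [Finset.sum_boole, Finset.filter_filter, pairs_ending_at]

theorem support_cauchyKernel_subset : (cauchyKernel R n).support ⊆ Finset.Iic (staircase n) :=
  fun _ hd => Finset.mem_Iic.mpr fun j =>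
    (monomial_le_degreeOf j hd).trans (degreeOf_cauchyKernel_le j)

theorem card_Iic_staircase : (Finset.Iic (staircase n)).card = n.factorial := by
  rw [Finsupp.card_Iic, Finset.prod_subset (Finset.subset_univ _)
    (fun i _ hi => by rw [Finsupp.notMem_support_iff.mp hi]; rfl)]
  simp [staircase, Fin.prod_univ_eq_prod_range (fun i => i + 1),
    Finset.prod_range_add_one_eq_factorial]

end CauchyKernel

theorem exists_sum_mul_rename_eq (n : ℕ) :
    ∃ x y : Equiv.Perm (Fin n) → MvPolynomial (Fin n) ℂ, ∀ u : Equiv.Perm (Fin n),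
      ∑ w, x w * rename u (y w) = if u = 1 then vandermonde' n else 0 := by
  have e : Equiv.Perm (Fin n) ≃ Finset.Iic (staircase n) := Fintype.equivOfCardEq <| by
    rw [Fintype.card_perm, Fintype.card_fin, Fintype.card_coe, card_Iic_staircase]
  obtain ⟨x, y, hxy⟩ := exists_sum_mul_aeval_eq_eval (R := ℂ) e (cauchyKernel ℂ n)
    support_cauchyKernel_subset
  refine ⟨x, y, fun u => ?_⟩
  simp only [rename_eq_aeval, hxy]
  split_ifs with hu
  · subst hu
    exact eval_X_cauchyKernel
  · obtain ⟨j, hj⟩ := u.exists_apply_lt hu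
    exact eval_cauchyKernel_eq_zero hj rfl

theorem vandermonde'_ne_zero (n : ℕ) : vandermonde' n ≠ 0 :=
  Finset.prod_ne_zero_iff.mpr fun _ hp =>
    sub_ne_zero.mpr fun h => (Finset.mem_filter.mp hp).2.ne (X_injective h)

theorem vandermonde'_mul_sum_mul_apply {n : ℕ}
    {D : MvPolynomial (Fin n) ℂ → MvPolynomial (Fin n) ℂ}
    (hD : ∀ g, vandermonde' n * D g
      = ∑ w : Equiv.Perm (Fin n), ((Equiv.Perm.sign w : ℤ) : ℂ) • rename (⇑w) g)
    (x y : Equiv.Perm (Fin n) → MvPolynomial (Fin n) ℂ) (f : MvPolynomial (Fin n) ℂ) :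
    vandermonde' n * ∑ w, x w * D (y w * f) =
      ∑ u : Equiv.Perm (Fin n), ((Equiv.Perm.sign u : ℤ) : ℂ) •
        ((∑ w, x w * rename u (y w)) * rename u f) := by
  simp only [Finset.mul_sum, mul_left_comm (vandermonde' n), hD, Finset.sum_mul, Finset.smul_sum,
    map_mul, mul_smul_comm, mul_assoc]
  exact Finset.sum_comm

/-- There exist polynomials `x_w, y_w` indexed by `w ∈ Sₙ` such that
`id = Σ_w M_{x_w} ∘ ∂_{w₀} ∘ M_{y_w}` as operators on `ℂ[x₁,…,xₙ]`, where `∂_{w₀}` is the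
longest divided difference operator, characterized by `Δ · ∂_{w₀}(g) = Σ_w sgn(w)·w(g)`. -/
theorem identity_decomposition_nilHecke (n : ℕ)
    (Dw0 : MvPolynomial (Fin n) ℂ → MvPolynomial (Fin n) ℂ)
    (hDw0 : ∀ g, vandermonde' n * Dw0 g
      = ∑ w : Equiv.Perm (Fin n), ((Equiv.Perm.sign w : ℤ) : ℂ) • rename (⇑w) g) :
    ∃ x y : Equiv.Perm (Fin n) → MvPolynomial (Fin n) ℂ,
      ∀ f : MvPolynomial (Fin n) ℂ,
        f = ∑ w : Equiv.Perm (Fin n), x w * Dw0 (y w * f) := by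
  obtain ⟨x, y, hxy⟩ := exists_sum_mul_rename_eq n
  refine ⟨x, y, fun f => mul_left_cancel₀ (vandermonde'_ne_zero n) ?_⟩
  rw [vandermonde'_mul_sum_mul_apply hDw0]
  simp [hxy]
end

section
/- The polynomial ring ℂ[x_1,…,x_n] is a free module of rank n! over its subring of symmetric polynomials. -/
/-!
Induction on `n`, over an arbitrary integral domain `R`; write `Λ` for the symmetric polynomials
in `x₀, …, xₙ` and `B` for the polynomials symmetric in `x₁, …, xₙ` only.

Reading `R[x₀, …, xₙ]` as `R[x₀][x₁, …, xₙ]`, the induction hypothesis over the coefficient ring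
`R[x₀]` says that it is free of rank `n!` over `B`.

On the other hand `B ≅ Λ[T] ⧸ (f)` via `T ↦ x₀`, where `f = ∏ᵢ (T - xᵢ)` has symmetric
coefficients. Surjectivity: `B` is generated over `R[x₀]` by the elementary symmetric polynomials
`e'ₖ` of `x₁, …, xₙ`, and `e'ₖ₊₁ = eₖ₊₁ - x₀ e'ₖ` lies in `Λ[x₀]`. Kernel: if `g(x₀) = 0` then,
the coefficients of `g` being symmetric, `g(xᵢ) = 0` for every `i`, so `g mod f` has `n + 1`
distinct roots but degree at most `n`. Hence `B` is free of rank `n + 1` over `Λ`, and the ranks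
multiply along the tower `Λ ⊆ B ⊆ R[x₀, …, xₙ]`.
-/

open MvPolynomial
open scoped Polynomial

set_option synthInstance.maxHeartbeats 100000

namespace Module.Basis

variable {ι R R' A A' : Type*} [CommSemiring R] [CommSemiring R'] [Semiring A] [Semiring A']
  [Algebra R A] [Algebra R' A'] {S : Subalgebra R A} {S' : Subalgebra R' A'}

noncomputable def ofRingEquivOfMemIff (e : A ≃+* A') (he : ∀ x, x ∈ S ↔ e x ∈ S')
    (b : Basis ι S' A') : Basis ι S A :=
  let eS : S ≃+* S' :=
    { toFun x := ⟨e x, (he x).1 x.2⟩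
      invFun y := ⟨e.symm y, (he _).2 (by simp)⟩
      left_inv x := Subtype.ext (e.symm_apply_apply (x : A))
      right_inv y := Subtype.ext (e.apply_symm_apply (y : A'))
      map_mul' x y := Subtype.ext (map_mul e (x : A) (y : A))
      map_add' x y := Subtype.ext (map_add e (x : A) (y : A)) }
  .ofRepr
    { e.toAddEquiv.trans
        (b.repr.toAddEquiv.trans (Finsupp.mapRange.addEquiv eS.symm.toAddEquiv)) with
      map_smul' := fun c x => by
        have : e (c • x) = eS c • e x := map_mul e (c : A) x
        ext i
        simp [this] }

end Module.Basis

theorem Multiset.esymm_cons_succ {R : Type*} [CommSemiring R] (a : R) (s : Multiset R) (k : ℕ) :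
    (a ::ₘ s).esymm (k + 1) = s.esymm (k + 1) + a * s.esymm k := by
  simp only [Multiset.esymm, Multiset.powersetCard_cons, Multiset.map_add, Multiset.sum_add,
    Multiset.map_map, Function.comp_def, Multiset.prod_cons, Multiset.sum_map_mul_left]

namespace MvPolynomial

theorem rename_aeval_eq_aeval_rename {σ R : Type*} [CommSemiring R] (e : Equiv.Perm σ)
    (g : (symmetricSubalgebra σ R)[X]) (p : MvPolynomial σ R) :
    rename e (Polynomial.aeval p g) = Polynomial.aeval (rename e p) g := by
  have hA : (rename e).toRingHom.comp (algebraMap (symmetricSubalgebra σ R) _) =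
      algebraMap _ _ :=
    RingHom.ext fun a => a.2 e
  have := Polynomial.hom_eval₂ g (algebraMap (symmetricSubalgebra σ R) _) (rename e).toRingHom p
  rwa [hA] at this

theorem nonempty_basis_symmetricSubalgebra_of_subsingleton {σ R : Type*} [CommSemiring R]
    [Subsingleton σ] :
    Nonempty (Module.Basis (Fin 1) (symmetricSubalgebra σ R) (MvPolynomial σ R)) := by
  have hsurj :
      Function.Surjective (Algebra.linearMap (symmetricSubalgebra σ R) (MvPolynomial σ R)) :=
    fun p => ⟨⟨p, fun e => by
      rw [Equiv.Perm.subsingleton_eq_refl e, Equiv.coe_refl, rename_id_apply]⟩, rfl⟩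
  exact ⟨(Module.Basis.singleton (Fin 1) _).map
    (LinearEquiv.ofBijective _ ⟨Subtype.val_injective, hsurj⟩)⟩

section ProdXSubX

variable (σ R : Type*) [CommRing R] [Fintype σ]

noncomputable def prodXSubX : (MvPolynomial σ R)[X] :=
  ∏ i : σ, (Polynomial.X - Polynomial.C (X i))

variable {σ R}

theorem monic_prodXSubX : (prodXSubX σ R).Monic :=
  Polynomial.monic_prod_of_monic _ _ fun i _ => Polynomial.monic_X_sub_C (X i)

theorem natDegree_prodXSubX [Nontrivial R] : (prodXSubX σ R).natDegree = Fintype.card σ :=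
  Polynomial.natDegree_finsetProd_X_sub_C_eq_card _ _

theorem eval_X_prodXSubX (i : σ) : (prodXSubX σ R).eval (X i) = 0 := by
  rw [prodXSubX, Polynomial.eval_prod]
  exact Finset.prod_eq_zero (Finset.mem_univ i) (by simp)

theorem isSymmetric_coeff_prodXSubX (k : ℕ) : ((prodXSubX σ R).coeff k).IsSymmetric := by
  intro e
  rw [← RingHom.coe_coe, ← Polynomial.coeff_map]
  simp only [prodXSubX, Polynomial.map_prod, Polynomial.map_sub, Polynomial.map_X,
    Polynomial.map_C, RingHom.coe_coe, rename_X]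
  rw [Equiv.prod_comp e (fun i => Polynomial.X - Polynomial.C (X i))]

theorem exists_map_eq_prodXSubX :
    ∃ f : (symmetricSubalgebra σ R)[X], f.map (algebraMap _ _) = prodXSubX σ R :=
  (Polynomial.lifts_iff_coeff_lifts _).2 fun k => ⟨⟨_, isSymmetric_coeff_prodXSubX k⟩, rfl⟩

variable {f : (symmetricSubalgebra σ R)[X]}
  (hf : f.map (algebraMap (symmetricSubalgebra σ R) (MvPolynomial σ R)) = prodXSubX σ R)
include hf

theorem monic_of_map_eq_prodXSubX : f.Monic :=
  Polynomial.monic_of_injective (FaithfulSMul.algebraMap_injective _ _) (hf ▸ monic_prodXSubX)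

theorem natDegree_of_map_eq_prodXSubX [Nontrivial R] : f.natDegree = Fintype.card σ := by
  rw [← Polynomial.natDegree_map_eq_of_injective
    (FaithfulSMul.algebraMap_injective (symmetricSubalgebra σ R) (MvPolynomial σ R)), hf,
    natDegree_prodXSubX]

theorem aeval_X_of_map_eq_prodXSubX (i : σ) :
    Polynomial.aeval (X i : MvPolynomial σ R) f = 0 := by
  rw [Polynomial.aeval_def, Polynomial.eval₂_eq_eval_map, hf, eval_X_prodXSubX]

theorem dvd_of_aeval_X_eq_zero [IsDomain R] {g : (symmetricSubalgebra σ R)[X]} {j : σ}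
    (hg : Polynomial.aeval (X j : MvPolynomial σ R) g = 0) : f ∣ g := by
  classical
  have hinj : Function.Injective (algebraMap (symmetricSubalgebra σ R) (MvPolynomial σ R)) :=
    FaithfulSMul.algebraMap_injective _ _
  have hmonic := monic_of_map_eq_prodXSubX hf
  have hf1 : f ≠ 1 := ne_of_apply_ne Polynomial.natDegree <| by
    rw [natDegree_of_map_eq_prodXSubX hf, Polynomial.natDegree_one]
    exact (Fintype.card_pos_iff.2 ⟨j⟩).ne'
  rw [← Polynomial.modByMonic_eq_zero_iff_dvd hmonic]
  refine Polynomial.map_injective _ hinj ?_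
  rw [Polynomial.map_zero]
  refine Polynomial.eq_zero_of_natDegree_lt_card_of_eval_eq_zero _ X_injective (fun i => ?_) ?_
  · rw [Polynomial.eval_map_algebraMap, ← Equiv.swap_apply_left j i, ← rename_X,
      ← rename_aeval_eq_aeval_rename,
      Polynomial.aeval_modByMonic_eq_self_of_root (aeval_X_of_map_eq_prodXSubX hf j), hg,
      map_zero]
  · rw [Polynomial.natDegree_map_eq_of_injective hinj, ← natDegree_of_map_eq_prodXSubX hf]
    exact Polynomial.natDegree_modByMonic_lt g hmonic hf1

end ProdXSubX

section FinSucc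

variable {R : Type*} [CommSemiring R] {n : ℕ}

theorem esymm_fin_succ (k : ℕ) :
    esymm (Fin (n + 1)) R (k + 1) =
      rename Fin.succ (esymm (Fin n) R (k + 1)) + X 0 * rename Fin.succ (esymm (Fin n) R k) := by
  rw [rename_eq_aeval, aeval_esymm_eq_multiset_esymm, aeval_esymm_eq_multiset_esymm,
    esymm_eq_multiset_esymm, Fin.univ_succ, Finset.cons_val, Multiset.map_cons, Finset.map_val,
    Multiset.map_map, Multiset.esymm_cons_succ]
  rfl

variable (R n) in
noncomputable def finSuccEquivRight :
    MvPolynomial (Fin (n + 1)) R ≃ₐ[R] MvPolynomial (Fin n) R[X] :=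
  (renameEquiv R (_root_.finSuccEquiv n)).trans (optionEquivRight R (Fin n))

@[simp]
theorem finSuccEquivRight_X_zero : finSuccEquivRight R n (X 0) = C Polynomial.X := by
  simp [finSuccEquivRight]

@[simp]
theorem finSuccEquivRight_X_succ (i : Fin n) : finSuccEquivRight R n (X i.succ) = X i := by
  simp [finSuccEquivRight]

theorem finSuccEquivRight_symm_C (c : R[X]) :
    (finSuccEquivRight R n).symm (C c) = Polynomial.aeval (X 0) c := by
  rw [AlgEquiv.symm_apply_eq, ← Polynomial.aeval_algHom_apply, finSuccEquivRight_X_zero,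
    ← algebraMap_eq, Polynomial.aeval_algebraMap_apply, Polynomial.aeval_X_left_apply]

theorem finSuccEquivRight_symm_esymm (k : ℕ) :
    (finSuccEquivRight R n).symm (esymm (Fin n) R[X] k) =
      rename Fin.succ (esymm (Fin n) R k) := by
  rw [AlgEquiv.symm_apply_eq]
  simp [esymm, map_sum, map_prod]

theorem finSuccEquivRight_rename (e : Equiv.Perm (Fin n)) (p : MvPolynomial (Fin (n + 1)) R) :
    finSuccEquivRight R n (rename (Equiv.Perm.decomposeFin.symm (0, e)) p) =
      rename e (finSuccEquivRight R n p) := by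
  suffices (finSuccEquivRight R n).toAlgHom.comp
      (rename (Equiv.Perm.decomposeFin.symm (0, e))) =
      ((rename e).restrictScalars R).comp (finSuccEquivRight R n).toAlgHom from congr($this p)
  refine algHom_ext fun i => Fin.cases ?_ (fun i => ?_) i <;> simp

variable (R n) in
noncomputable def tailSymmetricSubalgebra :
    Subalgebra (symmetricSubalgebra (Fin (n + 1)) R) (MvPolynomial (Fin (n + 1)) R) where
  carrier := {p | (finSuccEquivRight R n p).IsSymmetric}
  mul_mem' {p q} hp hq := by
    rw [Set.mem_ofPred_eq, map_mul]
    exact hp.mul hq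
  add_mem' {p q} hp hq := by
    rw [Set.mem_ofPred_eq, map_add]
    exact hp.add hq
  algebraMap_mem' a e := by
    rw [← finSuccEquivRight_rename]
    exact congrArg _ (a.2 _)

theorem mem_tailSymmetricSubalgebra {p : MvPolynomial (Fin (n + 1)) R} :
    p ∈ tailSymmetricSubalgebra R n ↔ (finSuccEquivRight R n p).IsSymmetric :=
  Iff.rfl

theorem X_zero_mem_tailSymmetricSubalgebra : X 0 ∈ tailSymmetricSubalgebra R n := by
  rw [mem_tailSymmetricSubalgebra, finSuccEquivRight_X_zero]
  exact IsSymmetric.C _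

theorem coe_aeval_X_zero_tailSymmetricSubalgebra (g : (symmetricSubalgebra (Fin (n + 1)) R)[X]) :
    (Polynomial.aeval (⟨X 0, X_zero_mem_tailSymmetricSubalgebra⟩ : tailSymmetricSubalgebra R n) g :
      MvPolynomial (Fin (n + 1)) R) = Polynomial.aeval (X 0) g :=
  (Polynomial.aeval_algHom_apply (tailSymmetricSubalgebra R n).val _ g).symm

theorem finSuccEquivRight_symm_C_mem_adjoin (c : R[X]) :
    (finSuccEquivRight R n).symm (C c) ∈
      Algebra.adjoin (symmetricSubalgebra (Fin (n + 1)) R) {X 0} := by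
  rw [finSuccEquivRight_symm_C,
    ← Polynomial.aeval_map_algebraMap (symmetricSubalgebra (Fin (n + 1)) R)]
  exact Polynomial.aeval_mem_adjoin_singleton _ _

end FinSucc

section FinSuccRing

variable {R : Type*} [CommRing R] {n : ℕ}

theorem rename_succ_esymm_mem_adjoin (k : ℕ) :
    rename Fin.succ (esymm (Fin n) R k) ∈
      Algebra.adjoin (symmetricSubalgebra (Fin (n + 1)) R) {X 0} := by
  induction k with
  | zero => simp [esymm_zero]
  | succ k ih =>
    rw [eq_sub_of_add_eq (esymm_fin_succ (R := R) (n := n) k).symm]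
    refine sub_mem ?_ (mul_mem (Algebra.subset_adjoin rfl) ih)
    exact (Algebra.adjoin (symmetricSubalgebra (Fin (n + 1)) R)
      {(X 0 : MvPolynomial (Fin (n + 1)) R)}).algebraMap_mem
      (⟨_, esymm_isSymmetric (Fin (n + 1)) R (k + 1)⟩ : symmetricSubalgebra (Fin (n + 1)) R)

theorem finSuccEquivRight_symm_aeval_esymm_mem_adjoin (q : MvPolynomial (Fin n) R[X]) :
    (finSuccEquivRight R n).symm (aeval (fun i : Fin n => esymm (Fin n) R[X] (i + 1)) q) ∈
      Algebra.adjoin (symmetricSubalgebra (Fin (n + 1)) R) {X 0} := by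
  induction q using MvPolynomial.induction_on with
  | C c => rw [aeval_C, algebraMap_eq]; exact finSuccEquivRight_symm_C_mem_adjoin c
  | add p q hp hq => rw [map_add, map_add]; exact add_mem hp hq
  | mul_X p i hp =>
    rw [map_mul, aeval_X, map_mul, finSuccEquivRight_symm_esymm]
    exact mul_mem hp (rename_succ_esymm_mem_adjoin _)

theorem tailSymmetricSubalgebra_le_adjoin :
    tailSymmetricSubalgebra R n ≤
      Algebra.adjoin (symmetricSubalgebra (Fin (n + 1)) R) {X 0} := by
  intro p hp
  obtain ⟨q, hq⟩ := (esymmAlgHom_fin_bijective R[X] n).2 ⟨_, hp⟩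
  replace hq : aeval (fun i : Fin n => esymm (Fin n) R[X] (i + 1)) q = finSuccEquivRight R n p :=
    (esymmAlgHom_apply q).symm.trans (congrArg Subtype.val hq)
  rw [← (finSuccEquivRight R n).symm_apply_apply p, ← hq]
  exact finSuccEquivRight_symm_aeval_esymm_mem_adjoin q

noncomputable def isAdjoinRootMonicTailSymmetricSubalgebra [IsDomain R]
    {f : (symmetricSubalgebra (Fin (n + 1)) R)[X]}
    (hf : f.map (algebraMap _ _) = prodXSubX (Fin (n + 1)) R) :
    IsAdjoinRootMonic (tailSymmetricSubalgebra R n) f where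
  map := Polynomial.aeval ⟨X 0, X_zero_mem_tailSymmetricSubalgebra⟩
  map_surjective b := by
    obtain ⟨g, hg⟩ : (b : MvPolynomial (Fin (n + 1)) R) ∈
        (Polynomial.aeval (R := symmetricSubalgebra (Fin (n + 1)) R) (X 0)).range := by
      rw [← Algebra.adjoin_singleton_eq_range_aeval]
      exact tailSymmetricSubalgebra_le_adjoin b.2
    exact ⟨g, Subtype.ext ((coe_aeval_X_zero_tailSymmetricSubalgebra g).trans hg)⟩
  ker_map := by
    ext g
    rw [RingHom.mem_ker, Ideal.mem_span_singleton, ← Subtype.val_inj,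
      coe_aeval_X_zero_tailSymmetricSubalgebra]
    refine ⟨dvd_of_aeval_X_eq_zero hf, ?_⟩
    rintro ⟨q, rfl⟩
    rw [map_mul, aeval_X_of_map_eq_prodXSubX hf, zero_mul]
    rfl
  monic := monic_of_map_eq_prodXSubX hf

end FinSuccRing

theorem nonempty_basis_symmetricSubalgebra (R : Type*) [CommRing R] [IsDomain R] (n : ℕ) :
    Nonempty (Module.Basis (Fin n.factorial) (symmetricSubalgebra (Fin n) R)
      (MvPolynomial (Fin n) R)) := by
  induction n generalizing R with
  | zero =>
    obtain ⟨b⟩ := nonempty_basis_symmetricSubalgebra_of_subsingleton (σ := Fin 0) (R := R)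
    exact ⟨b.reindex (finCongr Nat.factorial_zero.symm)⟩
  | succ n ih =>
    obtain ⟨c⟩ := ih R[X]
    obtain ⟨f, hf⟩ := exists_map_eq_prodXSubX (σ := Fin (n + 1)) (R := R)
    let bTail := IsAdjoinRootMonic.basis (S := tailSymmetricSubalgebra R n)
      (isAdjoinRootMonicTailSymmetricSubalgebra hf)
    let bPoly : Module.Basis (Fin n.factorial) (tailSymmetricSubalgebra R n) _ :=
      c.ofRingEquivOfMemIff (finSuccEquivRight R n).toRingEquiv fun _ => Iff.rfl
    have hdeg : f.natDegree = n + 1 := by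
      rw [natDegree_of_map_eq_prodXSubX hf, Fintype.card_fin]
    exact ⟨(bTail.smulTower bPoly).reindex ((finCongr hdeg).prodCongr (Equiv.refl _) |>.trans
      (finProdFinEquiv.trans (finCongr (Nat.factorial_succ n).symm)))⟩

end MvPolynomial

/-- The polynomial ring `ℂ[x₁,…,xₙ]` is a free module of rank `n!` over its subring of
symmetric polynomials. -/
theorem polynomials_free_of_rank_factorial_over_symmetric (n : ℕ) :
    Nonempty (Module.Basis (Fin (Nat.factorial n)) (symmetricSubalgebra (Fin n) ℂ) (MvPolynomial (Fin n) ℂ)) :=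
  nonempty_basis_symmetricSubalgebra ℂ n
end

section
/- Let S be a finite nonempty set and, for each s ∈ S, let T(s) ⊆ S be a subset. In the polynomial ring ℂ[X_s : s ∈ S], the ideal generated by the polynomials P_s := ∏_{t ∈ T(s)} (X_s − X_t + 1/2), for s ranging over S (with the empty product equal to 1), is the unit ideal. -/
/-!
If `x` were a common zero of the `P_s`, choose `s` with `Re (x s)` maximal. Every factor of `P_s`
then has real part `Re (x s) - Re (x t) + 1/2 ≥ 1/2`, so `P_s(x) ≠ 0`. Hence the generators have
no common zero, and by the Nullstellensatz they generate the unit ideal.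
-/

open MvPolynomial

theorem MvPolynomial.span_eq_top_of_forall_exists_aeval_ne_zero {k K σ : Type*} [Field k]
    [Field K] [IsAlgClosed K] [Algebra k K] [Finite σ] (s : Set (MvPolynomial σ k))
    (h : ∀ x : σ → K, ∃ p ∈ s, aeval x p ≠ 0) : Ideal.span s = ⊤ := by
  have hempty : zeroLocus K (Ideal.span s) = ∅ := by
    rw [zeroLocus_span, Set.eq_empty_iff_forall_notMem]
    intro x hx
    obtain ⟨p, hp, hpx⟩ := h x
    exact hpx (hx p hp)
  rw [← Ideal.radical_eq_top, ← vanishingIdeal_zeroLocus_eq_radical (K := K), hempty,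
    vanishingIdeal_empty]

theorem Complex.exists_forall_sub_add_ne_zero {S : Type*} [Finite S] [Nonempty S]
    (x : S → ℂ) {c : ℂ} (hc : 0 < c.re) : ∃ s, ∀ t, x s - x t + c ≠ 0 := by
  obtain ⟨s, hs⟩ := Finite.exists_max fun s => (x s).re
  refine ⟨s, fun t h => ?_⟩
  have hre := congrArg Complex.re h
  simp only [Complex.add_re, Complex.sub_re, Complex.zero_re] at hre
  linarith [hs t]

theorem unit_ideal_of_shift_products_general (S : Type*) [Fintype S] [Nonempty S]
    (T : S → Finset S) :
    Ideal.span
      {p : MvPolynomial S ℂ | ∃ s : S, p = ∏ t ∈ T s, (X s - X t + C (1 / 2 : ℂ))} = ⊤ := by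
  refine span_eq_top_of_forall_exists_aeval_ne_zero (K := ℂ) _ fun x => ?_
  obtain ⟨s, hs⟩ := Complex.exists_forall_sub_add_ne_zero x (c := 1 / 2) (by norm_num)
  refine ⟨_, ⟨s, rfl⟩, ?_⟩
  simpa [Finset.prod_ne_zero_iff] using fun t _ => hs t

/-- For a finite nonempty set `S` and subsets `T s ⊆ S`, the ideal of `ℂ[X_s : s ∈ S]`
generated by the polynomials `P_s = ∏_{t ∈ T s} (X_s - X_t + 1/2)` is the unit ideal. -/
theorem unit_ideal_of_shift_products (S : Type*) [Fintype S] [Nonempty S] [DecidableEq S]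
    (T : S → Finset S) :
    Ideal.span
      {p : MvPolynomial S ℂ | ∃ s : S, p = ∏ t ∈ T s, (X s - X t + C (1 / 2 : ℂ))} = ⊤ :=
  unit_ideal_of_shift_products_general S T
end
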